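/- Let F = {f₁,…,f_k} be an IFS of similarities on a complete metric space X with similarity factors c_i ∈ (0,1) and attractor K (with diam(K) > 0), equipped with its natural fractal structure, and let s ≥ 0 be the unique solution of ∑_{i∈I} c_i^s = 1. Define H^s_{n,3}(K) = inf{∑_{ω ∈ I^m} diam(f_ω(K))^s : m ≥ n} and H^s_3(K) = lim_{n→∞} H^s_{n,3}(K). Then H^s_3(K) = diam(K)^s, and in particular H^s_3(K) ∈ (0, ∞). -/
import Mathlib


open Metric Set Filter Topology MeasureTheory ENNReal NNReal

noncomputable section

/-- A map is a similarity with factor `c` if it scales all distances exactly by `c`. -/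
def IsSimilarity {X : Type*} [MetricSpace X] (f : X → X) (c : ℝ) : Prop :=
  ∀ x y, dist (f x) (f y) = c * dist x y

/-- Composition `f_{ω₁} ∘ ⋯ ∘ f_{ω_n}` of the maps of an IFS along a word `ω`. -/
def wordComp {X : Type*} {k : ℕ} (f : Fin k → X → X) {n : ℕ} (ω : Fin n → Fin k) : X → X :=
  (List.ofFn fun i => f (ω i)).foldr (· ∘ ·) id

/-- Number of elements of level `Γ_n` of the natural fractal structure (counted with
multiplicity over words) that meet `K`. -/
def levelCount {X : Type*} [MetricSpace X] {k : ℕ} (f : Fin k → X → X) (K : Set X)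
    (n : ℕ) : ℕ :=
  Set.ncard {ω : Fin n → Fin k | ((wordComp f ω '' K) ∩ K).Nonempty}

/-- `δ(K, Γ_n)`: supremum of diameters of the elements of level `Γ_n` meeting `K`. -/
def deltaLevel {X : Type*} [MetricSpace X] {k : ℕ} (f : Fin k → X → X) (K : Set X)
    (n : ℕ) : ℝ :=
  sSup {d : ℝ | ∃ ω : Fin n → Fin k, ((wordComp f ω '' K) ∩ K).Nonempty ∧
    d = Metric.diam (wordComp f ω '' K)}

/-- `N_δ(K)`: the largest number of disjoint closed balls of radius `δ` with centres in `K`. -/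
def packingNum {X : Type*} [MetricSpace X] (K : Set X) (δ : ℝ) : ℕ :=
  sSup {m : ℕ | ∃ t : Finset X, t.card = m ∧ ↑t ⊆ K ∧
    (t : Set X).Pairwise fun x y => Disjoint (Metric.closedBall x δ) (Metric.closedBall y δ)}

/-- The pre-measure `H^s_{n,3}(K)`: infimum over whole levels `m ≥ n` of the sum of the
`s`-th powers of the diameters of all elements of that level (with multiplicity). -/
def H3pre {X : Type*} [MetricSpace X] {k : ℕ} (f : Fin k → X → X) (K : Set X)
    (s : ℝ) (n : ℕ) : ℝ≥0∞ :=
  ⨅ m : {m : ℕ // n ≤ m}, ∑ ω : Fin m.1 → Fin k,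
    ENNReal.ofReal (Metric.diam (wordComp f ω '' K)) ^ s

/-- `H^s_3(K)`: the (monotone) limit of `H^s_{n,3}(K)` as `n → ∞`. -/
def H3 {X : Type*} [MetricSpace X] {k : ℕ} (f : Fin k → X → X) (K : Set X) (s : ℝ) : ℝ≥0∞ :=
  ⨆ n : ℕ, H3pre f K s n

/-- `H^s_4(K)`: limit over `n` of the infimum over finite covers of `K` by elements of
levels `≥ n` of the natural fractal structure. -/
def H4 {X : Type*} [MetricSpace X] {k : ℕ} (f : Fin k → X → X) (K : Set X) (s : ℝ) : ℝ≥0∞ :=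
  ⨆ n : ℕ, ⨅ (𝒜 : Set (Set X)) (_ : 𝒜.Finite ∧
      (∀ A ∈ 𝒜, ∃ m, n ≤ m ∧ ∃ ω : Fin m → Fin k, A = wordComp f ω '' K) ∧ K ⊆ ⋃₀ 𝒜),
    ∑' A : 𝒜, ENNReal.ofReal (Metric.diam (A : Set X)) ^ s

/-- `H^s_5(K)`: limit over `n` of the infimum over countable covers of `K` by elements of
levels `≥ n` of the natural fractal structure. -/
def H5 {X : Type*} [MetricSpace X] {k : ℕ} (f : Fin k → X → X) (K : Set X) (s : ℝ) : ℝ≥0∞ :=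
  ⨆ n : ℕ, ⨅ (𝒜 : Set (Set X)) (_ : 𝒜.Countable ∧
      (∀ A ∈ 𝒜, ∃ m, n ≤ m ∧ ∃ ω : Fin m → Fin k, A = wordComp f ω '' K) ∧ K ⊆ ⋃₀ 𝒜),
    ∑' A : 𝒜, ENNReal.ofReal (Metric.diam (A : Set X)) ^ s

/-- `H^s_6(K)`: limit as `δ → 0` of the infimum over countable covers of `K` by
fractal-structure elements of diameter at most `δ`. -/
def H6 {X : Type*} [MetricSpace X] {k : ℕ} (f : Fin k → X → X) (K : Set X) (s : ℝ) : ℝ≥0∞ :=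
  ⨆ (δ : ℝ) (_ : 0 < δ), ⨅ (𝒜 : Set (Set X)) (_ : 𝒜.Countable ∧
      (∀ A ∈ 𝒜, (∃ m, ∃ ω : Fin m → Fin k, A = wordComp f ω '' K) ∧ Metric.diam A ≤ δ) ∧
      K ⊆ ⋃₀ 𝒜),
    ∑' A : 𝒜, ENNReal.ofReal (Metric.diam (A : Set X)) ^ s

/-- The open set condition for a family of self-maps of `ℝ^d`. -/
def OSC {d k : ℕ} (f : Fin k → EuclideanSpace ℝ (Fin d) → EuclideanSpace ℝ (Fin d)) : Prop :=
  ∃ V : Set (EuclideanSpace ℝ (Fin d)), V.Nonempty ∧ IsOpen V ∧ Bornology.IsBounded V ∧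
    (∀ i, f i '' V ⊆ V) ∧ Pairwise fun i j => Disjoint (f i '' V) (f j '' V)

lemma wordComp_zero' {X : Type*} {k : ℕ} (f : Fin k → X → X) (ω : Fin 0 → Fin k) :
    wordComp f ω = id := by simp [wordComp]

lemma wordComp_succ' {X : Type*} {k : ℕ} (f : Fin k → X → X) {n : ℕ} (ω : Fin (n+1) → Fin k) :
    wordComp f ω = f (ω 0) ∘ wordComp f (fun i => ω i.succ) := by
  simp [wordComp, List.ofFn_succ]

lemma isSim_wordComp' {X : Type*} [MetricSpace X] {k : ℕ} (f : Fin k → X → X) (c : Fin k → ℝ)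
    (hf : ∀ i, IsSimilarity (f i) (c i)) :
    ∀ {n : ℕ} (ω : Fin n → Fin k), IsSimilarity (wordComp f ω) (∏ i, c (ω i)) := by
  intro n
  induction n with
  | zero => intro ω; rw [wordComp_zero']; intro x y; simp
  | succ n ih =>
    intro ω x y
    rw [wordComp_succ', Fin.prod_univ_succ]
    simp only [Function.comp_apply]
    rw [hf (ω 0), ih (fun i => ω i.succ) x y, mul_assoc]

lemma diam_sim_image' {X : Type*} [MetricSpace X] {g : X → X} {c : ℝ} (hc : 0 ≤ c)
    (hg : IsSimilarity g c) {K : Set X} (hb : Bornology.IsBounded K) :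
    Metric.diam (g '' K) = c * Metric.diam K := by
  rcases eq_or_lt_of_le hc with hc0 | hc0
  · have : ∀ x ∈ g '' K, ∀ y ∈ g '' K, dist x y ≤ 0 := by
      rintro _ ⟨x, hx, rfl⟩ _ ⟨y, hy, rfl⟩
      rw [hg]; rw [← hc0]; simp
    have h1 : Metric.diam (g '' K) ≤ 0 := Metric.diam_le_of_forall_dist_le le_rfl this
    have h2 : 0 ≤ Metric.diam (g '' K) := Metric.diam_nonneg
    rw [← hc0, zero_mul]; linarith
  · have hbi : Bornology.IsBounded (g '' K) := by
      rw [Metric.isBounded_iff] at hb ⊢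
      obtain ⟨C, hC⟩ := hb
      refine ⟨c * C, ?_⟩
      rintro _ ⟨x, hx, rfl⟩ _ ⟨y, hy, rfl⟩
      rw [hg]
      exact mul_le_mul_of_nonneg_left (hC hx hy) hc
    apply le_antisymm
    · apply Metric.diam_le_of_forall_dist_le (by positivity)
      rintro _ ⟨x, hx, rfl⟩ _ ⟨y, hy, rfl⟩
      rw [hg]
      exact mul_le_mul_of_nonneg_left (Metric.dist_le_diam_of_mem hb hx hy) hc
    · rw [← le_div_iff₀' hc0]
      apply Metric.diam_le_of_forall_dist_le (by positivity)
      intro x hx y hy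
      rw [le_div_iff₀' hc0, ← hg]
      exact Metric.dist_le_diam_of_mem hbi ⟨x, hx, rfl⟩ ⟨y, hy, rfl⟩

lemma levelSum_eq' {X : Type*} [MetricSpace X]
    {k : ℕ} (f : Fin k → X → X) (c : Fin k → ℝ) (hc : ∀ i, c i ∈ Set.Ioo (0 : ℝ) 1)
    (hf : ∀ i, IsSimilarity (f i) (c i))
    (K : Set X) (hb : Bornology.IsBounded K)
    (s : ℝ) (hs : 0 ≤ s) (hsum : ∑ i, c i ^ s = 1) (m : ℕ) :
    ∑ ω : Fin m → Fin k, ENNReal.ofReal (Metric.diam (wordComp f ω '' K)) ^ s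
      = ENNReal.ofReal (Metric.diam K) ^ s := by
  have key : ∀ ω : Fin m → Fin k,
      ENNReal.ofReal (Metric.diam (wordComp f ω '' K)) ^ s
        = ENNReal.ofReal ((∏ i, c (ω i) ^ s) * Metric.diam K ^ s) := by
    intro ω
    have hprod : 0 ≤ ∏ i, c (ω i) := Finset.prod_nonneg fun i _ => (hc (ω i)).1.le
    rw [diam_sim_image' hprod (isSim_wordComp' f c hf ω) hb,
      ENNReal.ofReal_rpow_of_nonneg (by positivity) hs,
      Real.mul_rpow hprod Metric.diam_nonneg,
      ← Real.finset_prod_rpow _ _ (fun i _ => (hc (ω i)).1.le)]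
  simp_rw [key]
  rw [← ENNReal.ofReal_sum_of_nonneg (fun ω _ => mul_nonneg
      (Finset.prod_nonneg fun i _ => Real.rpow_nonneg (hc (ω i)).1.le s)
      (Real.rpow_nonneg Metric.diam_nonneg s)),
    ← Finset.sum_mul, ← Fintype.sum_pow (fun j => c j ^ s) m, hsum, one_pow, one_mul,
    ← ENNReal.ofReal_rpow_of_nonneg Metric.diam_nonneg hs]

/-- if `s` solves `∑ cᵢ^s = 1`, then `H^s_{n,3}(K) → (diam K)^s`, which lies
in `(0, ∞)`. -/
theorem H3_tendsto_diam_rpow {X : Type*} [MetricSpace X] [CompleteSpace X]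
    {k : ℕ} (f : Fin k → X → X) (c : Fin k → ℝ) (hc : ∀ i, c i ∈ Set.Ioo (0 : ℝ) 1)
    (hf : ∀ i, IsSimilarity (f i) (c i))
    (K : Set X) (hne : K.Nonempty) (hcpt : IsCompact K) (hK : K = ⋃ i, f i '' K)
    (hdiam : 0 < Metric.diam K)
    (s : ℝ) (hs : 0 ≤ s) (hsum : ∑ i, c i ^ s = 1) :
    Filter.Tendsto (fun n : ℕ => H3pre f K s n) Filter.atTop
        (𝓝 (ENNReal.ofReal (Metric.diam K) ^ s)) ∧
      0 < ENNReal.ofReal (Metric.diam K) ^ s ∧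
      ENNReal.ofReal (Metric.diam K) ^ s < ⊤ := by
  have hconst : ∀ n, H3pre f K s n = ENNReal.ofReal (Metric.diam K) ^ s := by
    intro n
    have : Nonempty {m : ℕ // n ≤ m} := ⟨⟨n, le_rfl⟩⟩
    simp only [H3pre]
    simp_rw [levelSum_eq' f c hc hf K hcpt.isBounded s hs hsum]
    exact iInf_const
  refine ⟨?_, ?_, ?_⟩
  · simp_rw [hconst]; exact tendsto_const_nhds
  · exact ENNReal.rpow_pos (ENNReal.ofReal_pos.2 hdiam) ENNReal.ofReal_ne_top
  · exact ENNReal.rpow_lt_top_of_nonneg hs ENNReal.ofReal_ne_top
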